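/- arXiv:1910.04399 — 3 statements merged into one kernel-verified Lean document; each statement's English description precedes it below -/
import Mathlib

section
/- For m ≥ 2, if T is a path forest with exactly two paths and total order at most m², then T is m-burnable, unless the two path orders of T are exactly m² - 2 and 2. -/
/-!
Give the radii `0, …, m - 1` of the `m` balls to the two paths. A ball of radius `i` covers
`2 i + 1` consecutive vertices, so a path of order `L` is covered by any set of radii whose odd
numbers `2 i + 1` sum to at least `L`, and the odd numbers `1, 3, …, 2 m - 1` sum to `m²`.
It therefore suffices to find `S ⊆ {0, …, m - 1}` with `l₀ ≤ ∑_{i ∈ S} (2 i + 1) ≤ m² - l₁`.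
By induction on `m`, the subset sums of `1, 3, …, 2 m - 1` are all of `0, …, m²` except `2`
and `m² - 2`, and such a subset sum can always be chosen unless `{l₀, l₁} = {m² - 2, 2}`.
-/

/-- A graph is `m`-burnable if its vertices can be covered by `m` balls of
radii `0, 1, ..., m-1`. -/
def IsBurnable {V : Type*} (G : SimpleGraph V) (m : ℕ) : Prop :=
  ∃ f : Fin m → V, ∀ v : V, ∃ i : Fin m, G.edist (f i) v ≤ (i.val : ℕ∞)

/-- The burning number of a graph: the least `k` such that the graph is `k`-burnable. -/
noncomputable def burningNumber {V : Type*} (G : SimpleGraph V) : ℕ :=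
  sInf {k : ℕ | IsBurnable G k}

/-- The path forest whose `i`-th path has `l i` vertices. -/
def pathForest {n : ℕ} (l : Fin n → ℕ) : SimpleGraph (Σ i : Fin n, Fin (l i)) where
  Adj x y := x.1 = y.1 ∧ Nat.dist x.2.val y.2.val = 1
  symm := by
    constructor
    rintro ⟨i, a⟩ ⟨j, b⟩ ⟨h1, h2⟩
    exact ⟨h1.symm, by rwa [Nat.dist_comm]⟩
  loopless := by
    constructor
    rintro ⟨i, a⟩ ⟨_, h⟩
    simp [Nat.dist_self] at h

/-- The spider with head `none` and arms of lengths `l 0, ..., l (n-1)`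
(arm lengths count vertices excluding the head). -/
def spider {n : ℕ} (l : Fin n → ℕ) : SimpleGraph (Option (Σ i : Fin n, Fin (l i))) where
  Adj x y :=
    match x, y with
    | none, none => False
    | none, some b => b.2.val = 0
    | some a, none => a.2.val = 0
    | some a, some b => a.1 = b.1 ∧ Nat.dist a.2.val b.2.val = 1
  symm := by
    constructor
    rintro (_ | ⟨i, a⟩) (_ | ⟨j, b⟩) h <;> simp_all [Nat.dist_comm]

  loopless := by
    constructor
    rintro (_ | ⟨i, a⟩) h <;> simp_all [Nat.dist_self]

open Finset

lemma pathForest_edist_le_sub {n : ℕ} (l : Fin n → ℕ) (j : Fin n) {a b : ℕ} (ha : a < l j)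
    (hab : a ≤ b) (hb : b < l j) :
    (pathForest l).edist ⟨j, ⟨a, ha⟩⟩ ⟨j, ⟨b, hb⟩⟩ ≤ (b - a : ℕ) := by
  induction b, hab using Nat.le_induction with
  | base => simp
  | succ b hab ih =>
    have hadj : (pathForest l).Adj ⟨j, ⟨b, by omega⟩⟩ ⟨j, ⟨b + 1, hb⟩⟩ :=
      ⟨rfl, by simp [Nat.dist]⟩
    calc (pathForest l).edist ⟨j, ⟨a, ha⟩⟩ ⟨j, ⟨b + 1, hb⟩⟩
        ≤ (pathForest l).edist ⟨j, ⟨a, ha⟩⟩ ⟨j, ⟨b, by omega⟩⟩ +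
          (pathForest l).edist ⟨j, ⟨b, by omega⟩⟩ ⟨j, ⟨b + 1, hb⟩⟩ :=
          SimpleGraph.edist_triangle
      _ ≤ (b - a : ℕ) + 1 := add_le_add (ih _) (SimpleGraph.edist_eq_one_iff_adj.2 hadj).le
      _ = (b + 1 - a : ℕ) := by norm_cast; omega

lemma pathForest_edist_le_dist {n : ℕ} (l : Fin n → ℕ) (j : Fin n) (a b : Fin (l j)) :
    (pathForest l).edist ⟨j, a⟩ ⟨j, b⟩ ≤ Nat.dist a b := by
  rcases le_total a.val b.val with hab | hba
  · rw [Nat.dist_eq_sub_of_le hab]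
    exact pathForest_edist_le_sub l j a.isLt hab b.isLt
  · rw [Nat.dist_comm, Nat.dist_eq_sub_of_le hba, SimpleGraph.edist_comm]
    exact pathForest_edist_le_sub l j b.isLt hba a.isLt

lemma exists_cover_path_of_le_sum {ι : Type*} [DecidableEq ι] (r : ι → ℕ) (S : Finset ι)
    {L : ℕ} (hL : 0 < L) (hS : L ≤ ∑ i ∈ S, (2 * r i + 1)) :
    ∃ c : ι → Fin L, ∀ x : Fin L, ∃ i ∈ S, Nat.dist (c i) x ≤ r i := by
  induction S using Finset.induction_on generalizing L with
  | empty => simp at hS; omega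
  | insert a S ha ih =>
    rw [sum_insert ha] at hS
    by_cases hfit : L ≤ 2 * r a + 1
    · refine ⟨fun _ => ⟨min (r a) (L - 1), by omega⟩, fun x => ⟨a, mem_insert_self a S, ?_⟩⟩
      have := x.isLt
      simp only [Nat.dist]
      omega
    · -- the ball of radius `r a` covers the last `2 r a + 1` vertices, `S` covers the rest
      set L' := L - (2 * r a + 1)
      obtain ⟨c, hc⟩ := ih (L := L') (by omega) (by omega)
      refine ⟨Function.update (fun i => Fin.castLE (by omega) (c i)) a ⟨L' + r a, by omega⟩,
        fun x => ?_⟩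
      by_cases hx : x.val < L'
      · obtain ⟨i, hi, hd⟩ := hc ⟨x, hx⟩
        refine ⟨i, mem_insert_of_mem hi, ?_⟩
        rwa [Function.update_of_ne (ne_of_mem_of_not_mem hi ha)]
      · refine ⟨a, mem_insert_self a S, ?_⟩
        have := x.isLt
        simp only [Function.update_self, Nat.dist]
        omega

lemma isBurnable_pathForest_of_le_sum {n m : ℕ} (l : Fin n → ℕ) (hl : ∀ j, 1 ≤ l j)
    (p : ℕ → Fin n) (hp : ∀ j, l j ≤ ∑ i ∈ range m with p i = j, (2 * i + 1)) :
    IsBurnable (pathForest l) m := by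
  choose c hc using fun j => exists_cover_path_of_le_sum id _ (hl j) (hp j)
  refine ⟨fun i => ⟨p i, c (p i) i⟩, ?_⟩
  rintro ⟨j, x⟩
  obtain ⟨i, hi, hdist⟩ := hc j x
  obtain ⟨him, rfl⟩ := mem_filter.1 hi
  exact ⟨⟨i, mem_range.1 him⟩, (pathForest_edist_le_dist l _ _ _).trans (by exact_mod_cast hdist)⟩

lemma sum_range_two_mul_add_one (m : ℕ) : ∑ i ∈ range m, (2 * i + 1) = m ^ 2 := by
  induction m with
  | zero => simp
  | succ m ih => rw [sum_range_succ, ih]; ring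

lemma exists_subset_range_sum_two_mul_add_one_eq (m t : ℕ) (ht : t ≤ m ^ 2) (ht2 : t ≠ 2)
    (htm : t + 2 ≠ m ^ 2) : ∃ S ⊆ range m, ∑ i ∈ S, (2 * i + 1) = t := by
  induction m generalizing t with
  | zero => exact ⟨∅, empty_subset _, by simp_all⟩
  | succ m ih =>
    have hsq : (m + 1) ^ 2 = m ^ 2 + 2 * m + 1 := by ring
    by_cases hsmall : t ≤ m ^ 2 ∧ t + 2 ≠ m ^ 2
    · obtain ⟨S, hS, hsum⟩ := ih t hsmall.1 ht2 hsmall.2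
      exact ⟨S, hS.trans (range_subset_range.2 m.le_succ), hsum⟩
    · -- `t` must then use the largest summand `2 m + 1`, and the rest is again reachable
      have hlarge : 2 * m + 1 ≤ t ∧ t ≠ 2 * m + 3 := by
        rcases le_or_gt m 3 with hm | hm
        · interval_cases m <;> omega
        · have : 2 * m + 8 ≤ m ^ 2 := by nlinarith
          omega
      obtain ⟨S, hS, hsum⟩ := ih (t - (2 * m + 1)) (by omega) (by omega) (by omega)
      have hmS : m ∉ S := fun h => by simpa using hS h
      refine ⟨insert m S, insert_subset (by simp) (hS.trans (range_subset_range.2 m.le_succ)), ?_⟩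
      rw [sum_insert hmS]
      omega

lemma exists_subset_range_of_add_le_sq {a b m : ℕ} (hab : a + b ≤ m ^ 2)
    (hexc : ¬ ((a = m ^ 2 - 2 ∧ b = 2) ∨ (a = 2 ∧ b = m ^ 2 - 2))) :
    ∃ S ⊆ range m, a ≤ ∑ i ∈ S, (2 * i + 1) ∧ b ≤ ∑ i ∈ range m \ S, (2 * i + 1) := by
  have hsq : m ^ 2 ≠ 3 ∧ m ^ 2 ≠ 5 := by
    rcases le_or_gt m 2 with hm | hm
    · interval_cases m <;> decide
    · constructor <;> nlinarith
  obtain ⟨t, hat, htb, ht2, htm⟩ : ∃ t, a ≤ t ∧ t + b ≤ m ^ 2 ∧ t ≠ 2 ∧ t + 2 ≠ m ^ 2 := by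
    generalize m ^ 2 = q at *
    exact ⟨if a = 2 ∨ a + 2 = q then a + 1 else a, by split_ifs <;> omega⟩
  obtain ⟨S, hSm, rfl⟩ := exists_subset_range_sum_two_mul_add_one_eq m _ (by omega) ht2 htm
  refine ⟨S, hSm, hat, ?_⟩
  have := sum_sdiff (f := fun i => 2 * i + 1) hSm
  rw [sum_range_two_mul_add_one] at this
  omega

theorem stmt9_general (m : ℕ) (l : Fin 2 → ℕ)
    (hl : ∀ i, 1 ≤ l i)
    (horder : l 0 + l 1 ≤ m ^ 2)
    (hexc : ¬ ((l 0 = m ^ 2 - 2 ∧ l 1 = 2) ∨ (l 0 = 2 ∧ l 1 = m ^ 2 - 2))) :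
    IsBurnable (pathForest l) m := by
  obtain ⟨S, hSm, h0, h1⟩ := exists_subset_range_of_add_le_sq horder hexc
  let p : ℕ → Fin 2 := fun i => if i ∈ S then 0 else 1
  have hp0 : {i ∈ range m | p i = 0} = S := by
    ext i
    simpa [p] using fun h => mem_range.1 (hSm h)
  have hp1 : {i ∈ range m | p i = 1} = range m \ S := by
    ext i
    simp [p]
  refine isBurnable_pathForest_of_le_sum l hl p fun j => ?_
  fin_cases j
  · simpa [hp0] using h0
  · simpa [hp1] using h1

/-- A path forest with two paths and total order at most `m²` is `m`-burnable,
unless its path orders are exactly `m² - 2` and `2`. -/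
theorem stmt9 (m : ℕ) (hm : 2 ≤ m) (l : Fin 2 → ℕ)
    (hl : ∀ i, 1 ≤ l i)
    (horder : l 0 + l 1 ≤ m ^ 2)
    (hexc : ¬ ((l 0 = m ^ 2 - 2 ∧ l 1 = 2) ∨ (l 0 = 2 ∧ l 1 = m ^ 2 - 2))) :
    IsBurnable (pathForest l) m :=
  stmt9_general m l hl horder hexc
end

section
/- Let n ≥ 2 and let T be a path forest with n paths of total order at most 3n - 2. Then T is n-burnable unless the smallest path order of T equals two. -/
/-! Sort the path orders as `m₀ ≤ ⋯ ≤ m_{n-1}`. The order bound and the exception force `m₀ = 1`,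
and then `m_j ≤ 2j + 1` for all `j`: otherwise the first `j` paths have total order at least `j`
and the last `n - j` at least `(n - j)(2j + 2)`, exceeding `3n - 2`. A path of order at most
`2j + 1` lies in the ball of radius `j` around its vertex `min j (m_j - 1)`, so the `j`-th
shortest path is burnt by the `j`-th source. -/

open Finset

namespace pathForest

variable {n : ℕ} {l : Fin n → ℕ}

lemma edist_le_of_add_eq {i : Fin n} {a b : Fin (l i)} {k : ℕ} (h : a.val + k = b.val) :
    (pathForest l).edist ⟨i, a⟩ ⟨i, b⟩ ≤ k := by
  induction k generalizing b with
  | zero =>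
    obtain rfl : a = b := Fin.ext (by omega)
    simp
  | succ k ih =>
    let c : Fin (l i) := ⟨a + k, by omega⟩
    have hadj : (pathForest l).Adj ⟨i, c⟩ ⟨i, b⟩ := ⟨rfl, by simp [c, Nat.dist]; omega⟩
    calc (pathForest l).edist ⟨i, a⟩ ⟨i, b⟩
        ≤ (pathForest l).edist ⟨i, a⟩ ⟨i, c⟩ + (pathForest l).edist ⟨i, c⟩ ⟨i, b⟩ :=
          SimpleGraph.edist_triangle
      _ ≤ k + 1 := add_le_add (ih rfl) (SimpleGraph.edist_eq_one_iff_adj.2 hadj).le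
      _ = (k + 1 : ℕ) := by push_cast; rfl

lemma edist_le_dist (i : Fin n) (a b : Fin (l i)) :
    (pathForest l).edist ⟨i, a⟩ ⟨i, b⟩ ≤ Nat.dist a b := by
  rcases le_total a.val b.val with h | h
  · exact (edist_le_of_add_eq (by omega : a.val + (b - a) = b)).trans
      (Nat.cast_le.2 (by simp [Nat.dist]))
  · rw [SimpleGraph.edist_comm]
    exact (edist_le_of_add_eq (by omega : b.val + (a - b) = a)).trans
      (Nat.cast_le.2 (by simp [Nat.dist]))

lemma isBurnable_of_le_two_mul_add_one (σ : Fin n ≃ Fin n) (hl : ∀ i, 1 ≤ l i)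
    (hσ : ∀ j, l (σ j) ≤ 2 * j + 1) : IsBurnable (pathForest l) n := by
  refine ⟨fun j => ⟨σ j, ⟨min j (l (σ j) - 1), by have := hl (σ j); omega⟩⟩, ?_⟩
  rintro ⟨i, a⟩
  obtain ⟨j, rfl⟩ := σ.surjective i
  refine ⟨j, (edist_le_dist _ _ a).trans (Nat.cast_le.2 ?_)⟩
  have := hσ j
  simp only [Nat.dist]
  omega

end pathForest

lemma le_two_mul_add_one_of_monotone {n : ℕ} {m : Fin n → ℕ} (hm : Monotone m)
    (hpos : ∀ i, 1 ≤ m i) (hmin : ∃ i, m i = 1) (hsum : ∑ i, m i ≤ 3 * n - 2) (j : Fin n) :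
    m j ≤ 2 * j + 1 := by
  by_contra! hj
  have hj0 : 0 < (j : ℕ) := by
    obtain ⟨i, hi⟩ := hmin
    by_contra! h0
    have := hm (show j ≤ i from Fin.le_def.2 (by omega))
    omega
  have hlow : #(Ici j)ᶜ • 1 + #(Ici j) • (2 * j + 2) ≤ ∑ i, m i := by
    rw [← sum_compl_add_sum (Ici j)]
    exact add_le_add (card_nsmul_le_sum _ _ _ fun i _ => hpos i)
      (card_nsmul_le_sum _ _ _ fun i hi => hj.trans_le (hm (mem_Ici.1 hi)))
  rw [card_compl, Fin.card_Ici, Fintype.card_fin, smul_eq_mul, smul_eq_mul] at hlow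
  obtain ⟨c, hc⟩ : ∃ c, n - j = c + 1 := ⟨n - j - 1, by omega⟩
  rw [hc, show n - (c + 1) = j by omega] at hlow
  have hcj : c ≤ c * j := Nat.le_mul_of_pos_right c hj0
  have hbound : 3 * n - 2 = 3 * j + 3 * c + 1 := by omega
  nlinarith

lemma exists_eq_one_of_sum_le {n : ℕ} (hn : 0 < n) {l : Fin n → ℕ} (hl : ∀ i, 1 ≤ l i)
    (horder : ∑ i, l i ≤ 3 * n - 2) (hexc : ¬ ((∀ i, 2 ≤ l i) ∧ ∃ i, l i = 2)) :
    ∃ i, l i = 1 := by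
  by_contra! h
  have h3 : ∀ i, 3 ≤ l i := fun i => by
    by_contra! h3
    exact hexc ⟨fun k => by have := hl k; have := h k; omega,
      i, by have := hl i; have := h i; omega⟩
  have : ∑ _ : Fin n, 3 ≤ ∑ i, l i := sum_le_sum fun i _ => h3 i
  simp only [sum_const, card_univ, Fintype.card_fin, smul_eq_mul] at this
  omega

/-- A path forest with `n ≥ 2` paths of total order at most `3n - 2` is `n`-burnable
unless its smallest path order equals two. -/
theorem stmt11 (n : ℕ) (hn : 2 ≤ n) (l : Fin n → ℕ)
    (hl : ∀ i, 1 ≤ l i)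
    (horder : ∑ i, l i ≤ 3 * n - 2)
    (hexc : ¬ ((∀ i, 2 ≤ l i) ∧ ∃ i, l i = 2)) :
    IsBurnable (pathForest l) n := by
  obtain ⟨i, hi⟩ := exists_eq_one_of_sum_le (by omega) hl horder hexc
  let σ := Tuple.sort l
  refine pathForest.isBurnable_of_le_two_mul_add_one σ hl
    (le_two_mul_add_one_of_monotone (m := l ∘ σ) (Tuple.monotone_sort l) (fun _ => hl _)
      ⟨σ.symm i, by simp [hi]⟩ ?_)
  rwa [Function.comp_def, Equiv.sum_comp σ l]
end

section
/- For all m ≥ n ≥ 2, the path forest consisting of one path of order m² - n² + 2 and n - 1 paths of order 2 (of total order m² - (n-1)² + 1) is not m-burnable. -/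
/-!
Balls live inside a single component, and a ball of radius `r` in a path covers at most
`2r + 1` vertices. Each of the `n - 1` paths of order two has two vertices, which the single
ball of radius `0` cannot both cover, so it needs the center of a ball of positive radius.
These `n - 1` distinct radii are at least `1, …, n - 1`, so their balls have total size at
least `3 + 5 + ⋯ + (2n - 1) = n² - 1`. Of the total `1 + 3 + ⋯ + (2m - 1) = m²` at most
`m² - n² + 1` is left for the long path of order `m² - n² + 2`.
-/

open Finset

theorem Nat.card_Icc_sub_add_le (c r : ℕ) : #(Icc (c - r) (c + r)) ≤ 2 * r + 1 := by
  rw [Nat.card_Icc]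
  omega

theorem Nat.le_sum_of_forall_exists_dist_le {ι : Type*} (N : ℕ) (s : Finset ι) (c r : ι → ℕ)
    (hcover : ∀ a < N, ∃ i ∈ s, Nat.dist (c i) a ≤ r i) :
    N ≤ ∑ i ∈ s, (2 * r i + 1) := by
  classical
  have hsub : range N ⊆ s.biUnion fun i => Icc (c i - r i) (c i + r i) := by
    intro a ha
    obtain ⟨i, hi, hdist⟩ := hcover a (mem_range.mp ha)
    unfold Nat.dist at hdist
    exact mem_biUnion.mpr ⟨i, hi, mem_Icc.mpr ⟨by omega, by omega⟩⟩
  calc N = #(range N) := (card_range N).symm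
    _ ≤ #(s.biUnion fun i => Icc (c i - r i) (c i + r i)) := card_le_card hsub
    _ ≤ ∑ i ∈ s, #(Icc (c i - r i) (c i + r i)) := card_biUnion_le
    _ ≤ ∑ i ∈ s, (2 * r i + 1) := sum_le_sum fun i _ => Nat.card_Icc_sub_add_le _ _

theorem Finset.card_sq_le_sum_two_mul_add_one (s : Finset ℕ) :
    #s ^ 2 ≤ ∑ t ∈ s, (2 * t + 1) := by
  induction s using Finset.induction_on_max with
  | empty => simp
  | insert x s hlt ih =>
    have hx : x ∉ s := fun hx => (hlt x hx).false
    have hcard : #s ≤ x := by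
      simpa using card_le_card fun t ht => mem_range.mpr (hlt t ht)
    rw [card_insert_of_notMem hx, sum_insert hx]
    nlinarith

theorem Fin.sum_two_mul_val_add_one (m : ℕ) : ∑ i : Fin m, (2 * i.val + 1) = m ^ 2 := by
  rw [Fin.sum_univ_eq_sum_range (fun k => 2 * k + 1)]
  induction m with
  | zero => simp
  | succ k ih => rw [sum_range_succ, ih]; ring

theorem Fin.card_add_one_sq_le_sum_two_mul_val_add_one {m : ℕ} (s : Finset (Fin m))
    (hs : ∀ i ∈ s, 0 < i.val) : (#s + 1) ^ 2 ≤ ∑ i ∈ s, (2 * i.val + 1) + 1 := by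
  have h0 : 0 ∉ s.map Fin.valEmbedding := by
    simp only [mem_map, Fin.valEmbedding_apply, not_exists, not_and]
    exact fun i hi => (hs i hi).ne'
  have := card_sq_le_sum_two_mul_add_one (insert 0 (s.map Fin.valEmbedding))
  rwa [card_insert_of_notMem h0, sum_insert h0, card_map, sum_map, mul_zero, zero_add,
    add_comm 1] at this

namespace pathForest

variable {n : ℕ} {l : Fin n → ℕ}

theorem fst_eq_and_dist_le_length {x y : Σ i : Fin n, Fin (l i)} (w : (pathForest l).Walk x y) :
    x.1 = y.1 ∧ Nat.dist x.2.val y.2.val ≤ w.length := by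
  induction w with
  | nil => simp [Nat.dist_self]
  | @cons u v w huv _ ih =>
    have htri := Nat.dist.triangle_inequality u.2.val v.2.val w.2.val
    refine ⟨huv.1.trans ih.1, ?_⟩
    rw [SimpleGraph.Walk.length_cons]
    have := huv.2
    omega

theorem fst_eq_and_dist_le_of_edist_le {x y : Σ i : Fin n, Fin (l i)} {r : ℕ}
    (h : (pathForest l).edist x y ≤ r) : x.1 = y.1 ∧ Nat.dist x.2.val y.2.val ≤ r := by
  obtain ⟨w, hw⟩ := SimpleGraph.exists_walk_of_edist_ne_top (ne_top_of_le_ne_top (by simp) h)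
  obtain ⟨hfst, hdist⟩ := fst_eq_and_dist_le_length w
  exact ⟨hfst, hdist.trans (by exact_mod_cast hw ▸ h)⟩

variable {m : ℕ} {f : Fin m → Σ i : Fin n, Fin (l i)}

theorem le_sum_of_covers (hf : ∀ v, ∃ i : Fin m, (pathForest l).edist (f i) v ≤ i.val)
    (j : Fin n) : l j ≤ ∑ i ∈ univ.filter (fun i => (f i).1 = j), (2 * i.val + 1) := by
  refine Nat.le_sum_of_forall_exists_dist_le _ _ (fun i => (f i).2.val) _ fun a ha => ?_
  obtain ⟨i, hi⟩ := hf ⟨j, ⟨a, ha⟩⟩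
  obtain ⟨hfst, hdist⟩ := fst_eq_and_dist_le_of_edist_le hi
  exact ⟨i, mem_filter.mpr ⟨mem_univ _, hfst⟩, hdist⟩

theorem exists_pos_center_of_covers (hf : ∀ v, ∃ i : Fin m, (pathForest l).edist (f i) v ≤ i.val)
    {j : Fin n} (hj : 2 ≤ l j) : ∃ i : Fin m, (f i).1 = j ∧ 0 < i.val := by
  by_contra! hzero
  have hcenter : ∀ a : Fin (l j), ∃ i : Fin m, i.val = 0 ∧ (f i).2.val = a.val := by
    intro a
    obtain ⟨i, hi⟩ := hf ⟨j, a⟩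
    obtain ⟨hfst, hdist⟩ := fst_eq_and_dist_le_of_edist_le hi
    have hi0 : i.val = 0 := Nat.le_zero.mp (hzero i hfst)
    rw [hi0] at hdist
    exact ⟨i, hi0, Nat.eq_of_dist_eq_zero (Nat.le_zero.mp hdist)⟩
  obtain ⟨i₀, hi₀, h₀⟩ := hcenter ⟨0, by omega⟩
  obtain ⟨i₁, hi₁, h₁⟩ := hcenter ⟨1, by omega⟩
  rw [Fin.ext (hi₀.trans hi₁.symm), h₁] at h₀
  exact one_ne_zero h₀

end pathForest

/-- For `m ≥ n ≥ 2`, the path forest with one path of order `m² - n² + 2` and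
`n - 1` paths of order `2` is not `m`-burnable. -/
theorem stmt13 (m n : ℕ) (hn : 2 ≤ n) (hm : n ≤ m) :
    ¬ IsBurnable (pathForest (fun i : Fin n => if i.val = 0 then m ^ 2 - n ^ 2 + 2 else 2)) m := by
  rintro ⟨f, hf⟩
  let z : Fin n := ⟨0, by omega⟩
  let S := univ.filter fun i : Fin m => (f i).1 = z
  let T := univ.filter fun i : Fin m => (f i).1 ≠ z ∧ 0 < i.val
  have hS : m ^ 2 - n ^ 2 + 2 ≤ ∑ i ∈ S, (2 * i.val + 1) := by
    simpa [z] using pathForest.le_sum_of_covers hf z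
  have hT : n - 1 ≤ #T := by
    have hsurj : Set.SurjOn (fun i : Fin m => (f i).1) T (univ.erase z) := by
      intro j hj
      have hj0 : j.val ≠ 0 := fun h => (mem_erase.mp hj).1 (Fin.ext h)
      obtain ⟨i, hfst, hpos⟩ := pathForest.exists_pos_center_of_covers hf (j := j) (by simp [hj0])
      exact ⟨i, by simp [T, hfst, hpos, (mem_erase.mp hj).1], hfst⟩
    simpa [card_erase_of_mem] using card_le_card_of_surjOn _ hsurj
  have hST : ∑ i ∈ S, (2 * i.val + 1) + ∑ i ∈ T, (2 * i.val + 1) ≤ m ^ 2 := by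
    rw [← sum_union (disjoint_filter.mpr fun i _ hS hT => hT.1 hS)]
    exact (sum_le_sum_of_subset (subset_univ _)).trans_eq (Fin.sum_two_mul_val_add_one m)
  have hTsum : n ^ 2 ≤ ∑ i ∈ T, (2 * i.val + 1) + 1 :=
    (Nat.pow_le_pow_left (by omega) 2).trans
      (Fin.card_add_one_sq_le_sum_two_mul_val_add_one T fun i hi => (mem_filter.mp hi).2.2)
  have hnm : n ^ 2 ≤ m ^ 2 := Nat.pow_le_pow_left hm 2
  omega
end
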